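/- Let M be an R-module that is Σ-C2, i.e., for every index set Λ the direct sum M^(Λ) satisfies the C2-condition. If M is a Σ-Rickart module, then M is a Σ-dual Rickart module. -/

import Mathlib

universe u v

/-- A module `M` is dual-Rickart if the image of every endomorphism is a direct summand. -/
def IsDualRickart (R : Type u) [Ring R] (M : Type v) [AddCommGroup M] [Module R M] : Prop :=
  ∀ φ : M →ₗ[R] M, ∃ q : Submodule R M, IsCompl (LinearMap.range φ) q

/-- A module `M` is Σ-dual Rickart if every direct sum of copies of `M` is dual-Rickart. -/
def IsSigmaDualRickart (R : Type u) [Ring R] (M : Type v) [AddCommGroup M] [Module R M] :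
    Prop :=
  ∀ Λ : Type v, IsDualRickart R (Λ →₀ M)

/-- A module `M` is Rickart if the kernel of every endomorphism is a direct summand. -/
def IsRickart (R : Type u) [Ring R] (M : Type v) [AddCommGroup M] [Module R M] : Prop :=
  ∀ φ : M →ₗ[R] M, ∃ q : Submodule R M, IsCompl (LinearMap.ker φ) q

/-- A module `M` is Σ-Rickart if every direct sum of copies of `M` is Rickart. -/
def IsSigmaRickart (R : Type u) [Ring R] (M : Type v) [AddCommGroup M] [Module R M] : Prop :=
  ∀ Λ : Type v, IsRickart R (Λ →₀ M)

/-- `M` satisfies the C2-condition: every submodule isomorphic to a direct summand is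
a direct summand. -/
def C2Cond (R : Type u) [Ring R] (M : Type v) [AddCommGroup M] [Module R M] : Prop :=
  ∀ N K : Submodule R M, (∃ K', IsCompl K K') → Nonempty (N ≃ₗ[R] K) →
    ∃ N', IsCompl N N'

noncomputable def LinearMap.rangeEquivOfIsComplKer {R : Type*} [Ring R] {M N : Type*}
    [AddCommGroup M] [Module R M] [AddCommGroup N] [Module R N] (f : M →ₗ[R] N)
    {q : Submodule R M} (h : IsCompl (LinearMap.ker f) q) : LinearMap.range f ≃ₗ[R] q :=
  f.quotKerEquivRange.symm.trans (Submodule.quotientEquivOfIsCompl _ _ h)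

theorem C2Cond.isDualRickart {R : Type u} [Ring R] {M : Type v} [AddCommGroup M] [Module R M]
    (hC2 : C2Cond R M) (hM : IsRickart R M) : IsDualRickart R M := by
  intro φ
  obtain ⟨q, hq⟩ := hM φ
  exact hC2 _ q ⟨_, hq.symm⟩ ⟨φ.rangeEquivOfIsComplKer hq⟩

/-- A Σ-C2, Σ-Rickart module is Σ-dual Rickart. -/
theorem stmt10 (R : Type u) [Ring R] (M : Type v) [AddCommGroup M] [Module R M]
    (hC2 : ∀ Λ : Type v, C2Cond R (Λ →₀ M)) (hM : IsSigmaRickart R M) :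
    IsSigmaDualRickart R M :=
  fun Λ => (hC2 Λ).isDualRickart (hM Λ)
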